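/- Let $N$ be a finitely generated module over $A_R = \mathbb{C}[u,t][[q]]/(ut-q)$ admitting a connection $D_N$ along the derivation $D_{A_R} = t\partial_t - u\partial_u$ (i.e. an additive map with $D_N(fm) = D_{A_R}(f)m + fD_N(m)$). Then multiplication by $t-1$ is injective on $N$. -/

import Mathlib

/-!
If `(t - 1) • z = 0`, then `D (t - 1) = t` acts as the identity on `z`, and the Leibniz rule
forces `z` into `⋂ₙ (t - 1)ⁿ N`. Since `A_R`, a quotient of power series over a Noetherian
ring, is Noetherian, Krull's intersection theorem gives some `r ∈ (t - 1)` with `r • z = z`;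
as `r` also kills `z`, `z = 0`.
-/

set_option synthInstance.maxHeartbeats 1000000
set_option maxHeartbeats 1000000

noncomputable section

/-- Polynomials `ℂ[u,t]` with `u = X 0`, `t = X 1`. -/
abbrev Pol2 : Type := MvPolynomial (Fin 2) ℂ

/-- The ring `A_R = ℂ[u,t][[q]]/(ut - q)`. -/
abbrev ARing : Type :=
  (PowerSeries Pol2) ⧸
    (Ideal.span {(PowerSeries.C : Pol2 →+* PowerSeries Pol2) (MvPolynomial.X 0 * MvPolynomial.X 1) - PowerSeries.X})

instance : Algebra ℂ ARing := Ideal.Quotient.algebra ℂ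
instance : Module ℂ ARing := Algebra.toModule

/-- The element `u` of `A_R`. -/
def uA : ARing := Ideal.Quotient.mk _ ((PowerSeries.C : Pol2 →+* PowerSeries Pol2) (MvPolynomial.X 0))

/-- The element `t` of `A_R`. -/
def tA : ARing := Ideal.Quotient.mk _ ((PowerSeries.C : Pol2 →+* PowerSeries Pol2) (MvPolynomial.X 1))

/-- The element `q` of `A_R`. -/
def qA : ARing := Ideal.Quotient.mk _ (PowerSeries.X : PowerSeries Pol2)

section Connection

variable {K R M : Type*} [Field K] [CharZero K] [CommRing R] [Algebra K R]
  [AddCommGroup M] [Module R M]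

/-- Applying the connection to `a ^ (n + 1) • w = 0`, where `z = a ^ n • w`, gives
`(n + 1) • z ∈ a ^ (n + 1) • M`, and `n + 1` is invertible since `K` has characteristic zero. -/
theorem exists_eq_pow_smul_of_connection (D : Derivation K R R) (DM : M →+ M)
    (hDM : ∀ (f : R) (x : M), DM (f • x) = D f • x + f • DM x)
    {a : R} {z : M} (hz : a • z = 0) (hDa : D a • z = z) (n : ℕ) :
    ∃ w : M, z = a ^ n • w := by
  induction n with
  | zero => exact ⟨z, by rw [pow_zero, one_smul]⟩
  | succ n ih =>
    obtain ⟨w, rfl⟩ := ih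
    have hkill : a ^ (n + 1) • w = 0 := by rw [pow_succ', mul_smul, hz]
    have hDpow : D (a ^ (n + 1)) • w = ((n + 1 : ℕ) : R) • a ^ n • w := by
      rw [Derivation.leibniz_pow, Nat.add_sub_cancel, smul_eq_mul, nsmul_eq_mul, mul_smul,
        mul_smul, ← smul_comm (D a) (a ^ n) w, hDa]
    have hsum : ((n + 1 : ℕ) : R) • a ^ n • w + a ^ (n + 1) • DM w = 0 := by
      rw [← hDpow, ← hDM, hkill, map_zero]
    set c : R := algebraMap K R ((n + 1 : ℕ) : K)⁻¹
    have hc : c * ((n + 1 : ℕ) : R) = 1 := by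
      rw [← map_natCast (algebraMap K R), ← map_mul, inv_mul_cancel₀ (Nat.cast_ne_zero.mpr
        n.succ_ne_zero), map_one]
    refine ⟨-(c • DM w), ?_⟩
    calc a ^ n • w = c • ((n + 1 : ℕ) : R) • a ^ n • w := by rw [smul_smul, hc, one_smul]
      _ = c • -(a ^ (n + 1) • DM w) := by rw [eq_neg_of_add_eq_zero_left hsum]
      _ = a ^ (n + 1) • -(c • DM w) := by rw [smul_neg, smul_neg, smul_comm]

end Connection

theorem eq_zero_of_smul_eq_zero_of_forall_exists_eq_pow_smul {R M : Type*} [CommRing R]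
    [IsNoetherianRing R] [AddCommGroup M] [Module R M] [Module.Finite R M] {a : R} {z : M}
    (hz : a • z = 0) (hdiv : ∀ n : ℕ, ∃ w : M, z = a ^ n • w) : z = 0 := by
  have hmem : z ∈ (⨅ n : ℕ, Ideal.span {a} ^ n • ⊤ : Submodule R M) := by
    refine Submodule.mem_iInf _ |>.mpr fun n => ?_
    obtain ⟨w, rfl⟩ := hdiv n
    exact Submodule.smul_mem_smul (Ideal.pow_mem_pow (Ideal.mem_span_singleton_self a) n)
      Submodule.mem_top
  obtain ⟨⟨r, hr⟩, hrz⟩ := (Ideal.mem_iInf_smul_pow_eq_bot_iff _ z).mp hmem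
  obtain ⟨b, rfl⟩ := Ideal.mem_span_singleton'.mp hr
  rw [← hrz, mul_smul, hz, smul_zero]

theorem stmt2_general (DA : Derivation ℂ ARing ARing) (hDt : DA tA = tA)
    (N : Type) [AddCommGroup N] [Module ARing N] [Module.Finite ARing N]
    (DN : N →+ N) (hDN : ∀ (f : ARing) (x : N), DN (f • x) = DA f • x + f • DN x) :
    Function.Injective (fun x : N => (tA - 1) • x) := by
  refine (injective_iff_map_eq_zero (DistribSMul.toAddMonoidHom N (tA - 1))).mpr ?_
  intro z hz
  have hDz : DA (tA - 1) • z = z := by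
    rw [map_sub, hDt, Derivation.map_one_eq_zero, sub_zero,
      ← sub_add_cancel tA 1, add_smul, one_smul]
    exact add_eq_right.mpr hz
  exact eq_zero_of_smul_eq_zero_of_forall_exists_eq_pow_smul hz
    (exists_eq_pow_smul_of_connection DA DN hDN hz hDz)

/-- Let `N` be a finitely generated module over `A_R = ℂ[u,t][[q]]/(ut-q)` admitting a
connection along the derivation `D_{A_R} = t∂t - u∂u` (the derivation with `D t = t`,
`D u = -u`).  Then multiplication by `t - 1` is injective on `N`. -/
theorem stmt2 (DA : Derivation ℂ ARing ARing) (hDu : DA uA = -uA) (hDt : DA tA = tA)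
    (N : Type) [AddCommGroup N] [Module ARing N] [Module.Finite ARing N]
    (DN : N →+ N) (hDN : ∀ (f : ARing) (x : N), DN (f • x) = DA f • x + f • DN x) :
    Function.Injective (fun x : N => (tA - 1) • x) :=
  stmt2_general DA hDt N DN hDN

end
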